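/- arXiv:1701.01968 — 4 statements merged into one kernel-verified Lean document; each statement's English description precedes it below -/
import Mathlib

section
/- The natural density of squarefree integers is 6/π²; that is, lim_{N→∞} (1/N) Σ_{k=1}^{N} μ(k)² = 6/π², where μ is the Möbius function. -/
/-!
Write `n = b² a` with `a` squarefree. Then `d² ∣ n` iff `d ∣ b`, so
`∑_{d² ∣ n} μ(d) = ∑_{d ∣ b} μ(d) = [b = 1] = μ(n)²`. Summing over `n ≤ N` and swapping the sums,
`∑_{n ≤ N} μ(n)² = ∑_d μ(d) ⌊N / d²⌋`. After division by `N` the `d`-th term tends to `μ(d) / d²`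
and is bounded by `1 / d²`, so by dominated convergence the limit is
`∑ μ(d) / d² = 1 / ζ(2) = 6 / π²`.
-/

open Filter Finset ArithmeticFunction Topology

open scoped ArithmeticFunction.Moebius LSeries.notation

theorem Nat.sq_dvd_sq_mul_iff_dvd {a b d : ℕ} (ha : Squarefree a) :
    d ^ 2 ∣ b ^ 2 * a ↔ d ∣ b := by
  have ha0 : a ≠ 0 := ha.ne_zero
  rcases eq_or_ne b 0 with rfl | hb
  · simp
  rcases eq_or_ne d 0 with rfl | hd
  · simp [hb, ha0]
  refine ⟨fun h => ?_, fun h => (pow_dvd_pow_of_dvd h 2).mul_right a⟩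
  rw [← Nat.factorization_le_iff_dvd hd hb]
  intro p
  have hp := (Nat.factorization_le_iff_dvd (by positivity) (by positivity)).mpr h p
  have hap := ha.natFactorization_le_one p
  simp only [Nat.factorization_mul (pow_ne_zero 2 hb) ha0, Nat.factorization_pow,
    Finsupp.add_apply, Finsupp.smul_apply, smul_eq_mul] at hp
  omega

theorem ArithmeticFunction.sum_divisors_moebius (n : ℕ) :
    ∑ d ∈ n.divisors, μ d = if n = 1 then 1 else 0 := by
  rw [← coe_mul_zeta_apply, moebius_mul_coe_zeta, one_apply]

theorem ArithmeticFunction.sum_moebius_of_sq_dvd {n : ℕ} (hn : n ≠ 0) :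
    ∑ d ∈ n.divisors with d ^ 2 ∣ n, μ d = μ n ^ 2 := by
  obtain ⟨a, b, rfl, ha⟩ := Nat.sq_mul_squarefree n
  have hb : b ≠ 0 := by rintro rfl; simp at hn
  have hdivisors : {d ∈ (b ^ 2 * a).divisors | d ^ 2 ∣ b ^ 2 * a} = b.divisors := by
    ext d
    simp only [mem_filter, Nat.mem_divisors, Nat.sq_dvd_sq_mul_iff_dvd ha]
    exact ⟨fun h => ⟨h.2, hb⟩, fun h => ⟨⟨h.1.trans ⟨b * a, by ring⟩, hn⟩, h.1⟩⟩
  have hsquarefree : Squarefree (b ^ 2 * a) ↔ b = 1 := by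
    refine ⟨fun h => Nat.isUnit_iff.mp (h b ⟨a, by ring⟩), ?_⟩
    rintro rfl
    simpa using ha
  rw [hdivisors, sum_divisors_moebius, moebius_sq]
  exact if_congr hsquarefree.symm rfl rfl

theorem ArithmeticFunction.sum_Icc_moebius_sq {R : Type*} [Ring R] (N : ℕ) :
    ∑ k ∈ Icc 1 N, (μ k : R) ^ 2 = ∑ d ∈ Icc 1 N, (N / d ^ 2 : ℕ) * (μ d : R) := by
  calc ∑ k ∈ Icc 1 N, (μ k : R) ^ 2
      = ∑ k ∈ Icc 1 N, ∑ d ∈ k.divisors with d ^ 2 ∣ k, (μ d : R) := by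
        refine sum_congr rfl fun k hk => ?_
        rw [← Int.cast_pow, ← sum_moebius_of_sq_dvd (by grind), Int.cast_sum]
    _ = ∑ d ∈ Icc 1 N, ∑ k ∈ Icc 1 N with d ^ 2 ∣ k, (μ d : R) := by
        refine sum_comm' fun k d => ?_
        simp only [mem_filter, mem_Icc, Nat.mem_divisors]
        constructor
        · rintro ⟨hk, ⟨hd, -⟩, hdk⟩
          have := Nat.le_of_dvd hk.1 hd
          have := Nat.pos_of_dvd_of_pos hd hk.1
          exact ⟨⟨hk, hdk⟩, by omega, by omega⟩
        · rintro ⟨⟨hk, hdk⟩, -⟩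
          exact ⟨hk, ⟨(dvd_pow_self d two_ne_zero).trans hdk, by omega⟩, hdk⟩
    _ = ∑ d ∈ Icc 1 N, (N / d ^ 2 : ℕ) * (μ d : R) := by
        refine sum_congr rfl fun d _ => ?_
        rw [sum_const, nsmul_eq_mul, ← Nat.Ioc_filter_dvd_card_eq_div]
        rfl

theorem ArithmeticFunction.tsum_moebius_div_sq :
    ∑' n : ℕ, (μ n : ℝ) / n ^ 2 = 6 / Real.pi ^ 2 := by
  have hL : L ↗μ 2 = 6 / (Real.pi : ℂ) ^ 2 := by
    have h := LSeries_zeta_mul_Lseries_moebius (s := 2) (by norm_num)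
    rw [LSeries_zeta_eq_riemannZeta (by norm_num), riemannZeta_two] at h
    rw [eq_inv_of_mul_eq_one_right h, inv_div]
  have hterm (n : ℕ) : LSeries.term ↗μ 2 n = ((μ n / n ^ 2 : ℝ) : ℂ) := by
    rw [LSeries.term_of_ne_zero' two_ne_zero, Complex.cpow_ofNat]
    push_cast
    norm_cast
  apply Complex.ofReal_injective
  rw [Complex.ofReal_tsum, ← funext hterm, ← LSeries, hL]
  norm_num

theorem tendsto_natCast_div_div_natCast (m : ℕ) :
    Tendsto (fun N : ℕ => ((N / m : ℕ) : ℝ) / N) atTop (𝓝 (m : ℝ)⁻¹) := by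
  have hm : (0 : ℝ) ≤ (m : ℝ)⁻¹ := inv_nonneg.mpr m.cast_nonneg
  refine ((tendsto_nat_floor_mul_div_atTop hm).comp tendsto_natCast_atTop_atTop).congr fun N => ?_
  simp [inv_mul_eq_div, Nat.floor_div_natCast]

theorem natCast_div_div_natCast_le (N m : ℕ) : ((N / m : ℕ) : ℝ) / N ≤ (m : ℝ)⁻¹ :=
  calc ((N / m : ℕ) : ℝ) / N ≤ (N / m : ℝ) / N := by gcongr; exact Nat.cast_div_le
    _ = (N / N : ℝ) / m := div_right_comm _ _ _
    _ ≤ 1 / m := by gcongr; exact div_self_le_one _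
    _ = (m : ℝ)⁻¹ := one_div _

theorem ArithmeticFunction.one_div_mul_sum_Icc_moebius_sq (N : ℕ) :
    (1 / N : ℝ) * ∑ k ∈ Icc 1 N, (μ k : ℝ) ^ 2
      = ∑' d : ℕ, (μ d : ℝ) * (((N / d ^ 2 : ℕ) : ℝ) / N) := by
  have hsupport (d : ℕ) (hd : d ∉ Icc 1 N) : (μ d : ℝ) * (((N / d ^ 2 : ℕ) : ℝ) / N) = 0 := by
    rcases Nat.eq_zero_or_pos d with rfl | hd0
    · simp
    · have : N < d ^ 2 := (lt_of_not_ge fun h => hd (mem_Icc.mpr ⟨hd0, h⟩)).trans_le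
        (Nat.le_self_pow two_ne_zero d)
      simp [Nat.div_eq_of_lt this]
  rw [tsum_eq_sum hsupport, sum_Icc_moebius_sq, mul_sum]
  exact sum_congr rfl fun d _ => by ring

theorem ArithmeticFunction.norm_moebius_mul_le (d : ℕ) {x : ℝ} (hx : 0 ≤ x) :
    ‖(μ d : ℝ) * x‖ ≤ x := by
  rw [norm_mul, Real.norm_of_nonneg hx, Real.norm_eq_abs]
  exact mul_le_of_le_one_left hx (mod_cast abs_moebius_le_one)

theorem squarefree_density :
    Filter.Tendsto
      (fun N : ℕ => (1 / N : ℝ) * ∑ k ∈ Finset.Icc 1 N, ((moebius k : ℝ)) ^ 2)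
      Filter.atTop (nhds (6 / Real.pi ^ 2)) := by
  simp_rw [one_div_mul_sum_Icc_moebius_sq, ← tsum_moebius_div_sq, div_eq_mul_inv _ ((_ : ℝ) ^ 2)]
  refine tendsto_tsum_of_dominated_convergence (bound := fun d : ℕ => ((d : ℝ) ^ 2)⁻¹)
    (Real.summable_nat_pow_inv.mpr one_lt_two) (fun d => ?_) (Eventually.of_forall fun N d => ?_)
  · exact_mod_cast (tendsto_natCast_div_div_natCast (d ^ 2)).const_mul (μ d : ℝ)
  · exact_mod_cast (norm_moebius_mul_le d (by positivity)).trans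
      (natCast_div_div_natCast_le N (d ^ 2))
end

section
/- Let (T, Σ_A⁺) be a one-sided subshift of finite type with positive topological entropy. Then there exists a point z ∈ Σ_A⁺ and a continuous function φ : Σ_A⁺ → ℝ such that limsup_{N→∞} (1/N) Σ_{n=1}^{N} μ(n) φ(Tⁿ(z)) > 0. In particular, Möbius orthogonality fails for (T, Σ_A⁺). -/
/-!
If every vertex `p` had at most one first-return path, any two loops at `p` of the same length
would coincide, so a walk would be determined by the first and last occurrence of each letter
(between them it is a loop): only polynomially many words, entropy zero. Hence some vertex `p`
has two distinct first-return loops `X ≠ Y`.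

The blocks `XXYXY` and `XXYYX` have the same length `D`. Since `p` marks the seams between
loops and `XXY` occurs in a concatenation of blocks only at block starts, the blocks of any
concatenation can be read off unambiguously. Choosing the block that starts at `kD + 1` by the
sign of `μ (kD + 1)`, and letting `φ` be `1` on the first block, `-1` on the second and `0`
elsewhere, the correlation sum becomes the sum of `|μ n|` over `n ≡ 1 mod D`; squarefree numbers
have positive density in that progression by an elementary sieve.
-/

open Filter Finset ArithmeticFunction

/-- The number of admissible words of length `n` of the one-sided subshift of finite
type over the alphabet `V` with adjacency relation `A`, i.e. words occurring as
initial segments of points of the subshift. -/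
noncomputable def sftWordCount (V : Type*) (A : V → V → Prop) (n : ℕ) : ℕ :=
  Nat.card {w : Fin n → V // ∃ z : ℕ → V,
    (∀ k : ℕ, A (z k) (z (k + 1))) ∧ ∀ i : Fin n, z i = w i}

/-- The topological entropy `h(T) = limsup (log #Bₙ)/n` of the subshift. -/
noncomputable def sftEntropy (V : Type*) (A : V → V → Prop) : ℝ :=
  Filter.limsup (fun n : ℕ => Real.log (sftWordCount V A n) / n) Filter.atTop

namespace MoebiusSFT

section Words

variable {V : Type*} (A : V → V → Prop)

def IsFirstReturn (p : V) (r : List V) : Prop :=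
  (p :: r ++ [p]).IsChain A ∧ p ∉ r

def IsLoop (p : V) (w : List V) : Prop :=
  w.IsChain A ∧ w.head? = some p ∧ w.getLast? = some p

variable {A}

theorem exists_eq_append_cons_notMem {p : V} {l : List V} (h : p ∈ l) :
    ∃ r w, l = r ++ p :: w ∧ p ∉ r := by
  induction l with
  | nil => simp at h
  | cons a l ih =>
    by_cases ha : a = p
    · exact ⟨[], l, by rw [ha]; rfl, List.not_mem_nil⟩
    · obtain ⟨r, w, rfl, hr⟩ := ih (List.mem_of_ne_of_mem (Ne.symm ha) h)
      exact ⟨a :: r, w, rfl, by simp [hr, Ne.symm ha]⟩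

theorem mem_of_getLast?_cons_eq {p : V} {u : List V} (hu : u ≠ [])
    (h : (p :: u).getLast? = some p) : p ∈ u := by
  rcases u.eq_nil_or_concat with rfl | ⟨L, b, rfl⟩
  · contradiction
  · rw [List.concat_eq_append, ← List.cons_append, List.getLast?_concat, Option.some_inj] at h
    simp [h]

/-- Cutting a loop at its first return to `p` leaves a shorter loop. -/
theorem IsLoop.eq_of_length_eq {p : V}
    (huniq : ∀ r r', IsFirstReturn A p r → IsFirstReturn A p r' → r = r') {w w' : List V}
    (hw : IsLoop A p w) (hw' : IsLoop A p w') (hl : w.length = w'.length) : w = w' := by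
  obtain ⟨hc, hh, hlast⟩ := hw
  obtain ⟨hc', hh', hlast'⟩ := hw'
  obtain ⟨u, rfl⟩ : ∃ u, w = p :: u := ⟨w.tail, by cases w <;> simp_all⟩
  obtain ⟨u', rfl⟩ : ∃ u', w' = p :: u' := ⟨w'.tail, by cases w' <;> simp_all⟩
  by_cases hu : u = []
  · subst hu; simp_all
  have hu' : u' ≠ [] := by rintro rfl; simp_all
  obtain ⟨r, t, rfl, hr⟩ := exists_eq_append_cons_notMem (mem_of_getLast?_cons_eq hu hlast)
  obtain ⟨r', t', rfl, hr'⟩ := exists_eq_append_cons_notMem (mem_of_getLast?_cons_eq hu' hlast')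
  obtain rfl : r = r' :=
    huniq r r' ⟨hc.prefix ⟨t, by simp⟩, hr⟩ ⟨hc'.prefix ⟨t', by simp⟩, hr'⟩
  have hrest : ∀ {t}, (p :: (r ++ p :: t)).IsChain A → (p :: (r ++ p :: t)).getLast? = some p →
      IsLoop A p (p :: t) := fun hc hlast =>
    ⟨hc.infix ⟨p :: r, [], by simp⟩, rfl,
      by rwa [← List.cons_append, List.getLast?_append_cons] at hlast⟩
  rw [IsLoop.eq_of_length_eq huniq (hrest hc hlast) (hrest hc' hlast') (by simpa using hl)]
termination_by w.length

theorem idxOf_getElem_le [DecidableEq V] {l : List V} {i : ℕ} (hi : i < l.length) :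
    l.idxOf l[i] ≤ i := by
  by_contra! h
  simpa using List.not_of_lt_findIdx h

theorem isLoop_drop_take {u : List V} (hu : u.IsChain A) {f l : ℕ} (hfl : f ≤ l)
    (hl : l < u.length) (hf : u[f] = u[l]) : IsLoop A u[l] ((u.take (l + 1)).drop f) := by
  refine ⟨(hu.take _).drop _, ?_, ?_⟩
  · simp [List.head?_drop, show f < l + 1 by omega,
      List.getElem?_eq_getElem (show f < u.length by omega), hf]
  · simp [List.getLast?_drop, List.getLast?_take, hfl, hl]

/-- Between the first and the last occurrence of a letter a walk is a loop. -/
theorem eq_of_idxOf_eq [DecidableEq V]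
    (huniq : ∀ p r r', IsFirstReturn A p r → IsFirstReturn A p r' → r = r') {u v : List V}
    (hu : u.IsChain A) (hv : v.IsChain A) (hl : u.length = v.length)
    (hfirst : ∀ a, u.idxOf a = v.idxOf a) (hlast : ∀ a, u.reverse.idxOf a = v.reverse.idxOf a) :
    u = v := by
  refine List.ext_getElem hl fun i hi hi' => ?_
  set f := u.idxOf u[i]
  set l := u.length - 1 - u.reverse.idxOf u[i]
  have hfi : f ≤ i := idxOf_getElem_le hi
  have hil : i ≤ l := by
    have := idxOf_getElem_le (l := u.reverse) (i := u.length - 1 - i) (by simp; omega)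
    simp only [List.getElem_reverse, show u.length - 1 - (u.length - 1 - i) = i by omega] at this
    omega
  have huf : u[f] = u[i] := List.getElem_idxOf (lt_of_le_of_lt hfi hi)
  have hgu : u.reverse.idxOf u[i] < u.length := by
    simpa using List.idxOf_lt_length_of_mem (List.mem_reverse.2 (List.getElem_mem hi))
  have hul : u[l] = u[i] := by
    have := List.getElem_idxOf (xs := u.reverse) (x := u[i]) (by simpa using hgu)
    rwa [List.getElem_reverse] at this
  have hvf : v[f]'(by omega) = u[i] := by
    simp only [f, hfirst]
    exact List.getElem_idxOf (by rw [← hfirst]; omega)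
  have hvl : v[l]'(by omega) = u[i] := by
    have := List.getElem_idxOf (xs := v.reverse) (x := u[i]) (by rw [← hlast]; simpa [← hl])
    rw [List.getElem_reverse] at this
    convert this using 2
    simp [l, hl, hlast]
  have key := (isLoop_drop_take hu (hfi.trans hil) (by omega) (huf.trans hul.symm)).eq_of_length_eq
    (huniq u[l]) (hul ▸ hvl.symm ▸ isLoop_drop_take hv (hfi.trans hil) (by omega)
      (hvf.trans hvl.symm)) (by simp [hl])
  have := congrArg (fun L => L[i - f]?) key
  simp only [List.getElem?_drop, List.getElem?_take, show f + (i - f) = i by omega] at this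
  simpa [hil, hi, hi'] using this

theorem sftWordCount_le_pow [Fintype V]
    (huniq : ∀ p r r', IsFirstReturn A p r → IsFirstReturn A p r' → r = r') (n : ℕ) :
    sftWordCount V A n ≤ (n + 1) ^ (2 * Fintype.card V) := by
  classical
  let W := {w : Fin n → V // ∃ z : ℕ → V, (∀ k, A (z k) (z (k + 1))) ∧ ∀ i : Fin n, z i = w i}
  have hlt : ∀ {u : List V}, u.length = n → ∀ a, u.idxOf a < n + 1 :=
    fun hu _ => Nat.lt_succ_of_le (hu ▸ List.idxOf_le_length)
  let G : W → V → Fin (n + 1) × Fin (n + 1) := fun w a =>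
    (⟨(List.ofFn w.1).idxOf a, hlt (by simp) a⟩,
      ⟨(List.ofFn w.1).reverse.idxOf a, hlt (by simp) a⟩)
  have hchain : ∀ w : W, (List.ofFn w.1).IsChain A := by
    rintro ⟨w, z, hz, hzw⟩
    refine List.isChain_iff_getElem.2 fun i hi => ?_
    simp only [List.getElem_ofFn, ← hzw]
    exact hz i
  have hG : Function.Injective G := fun w w' h => Subtype.ext <| List.ofFn_injective <|
    eq_of_idxOf_eq huniq (hchain w) (hchain w') (by simp)
      (fun a => congrArg (fun x => (x.1 : ℕ)) (congrFun h a))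
      (fun a => congrArg (fun x => (x.2 : ℕ)) (congrFun h a))
  calc sftWordCount V A n ≤ Nat.card (V → Fin (n + 1) × Fin (n + 1)) :=
        Nat.card_le_card_of_injective G hG
    _ = (n + 1) ^ (2 * Fintype.card V) := by simp [Nat.card_eq_fintype_card, pow_mul, sq]

theorem sftEntropy_nonpos_of_wordCount_le {k : ℕ} (h : ∀ n, sftWordCount V A n ≤ (n + 1) ^ k) :
    sftEntropy V A ≤ 0 := by
  have hlog : Tendsto (fun n : ℕ => k * (Real.log (n + 1) / n)) atTop (nhds 0) := by
    have := (Real.tendsto_pow_log_div_mul_add_atTop 1 (-1) 1 one_ne_zero).comp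
      (tendsto_natCast_atTop_atTop.atTop_add (tendsto_const_nhds (x := (1 : ℝ))))
    simpa using this.const_mul (k : ℝ)
  have hle : ∀ n : ℕ, Real.log (sftWordCount V A n) / n ≤ k * (Real.log (n + 1) / n) := by
    intro n
    rw [← mul_div_assoc, ← Real.log_pow]
    rcases (sftWordCount V A n).eq_zero_or_pos with h0 | hpos
    · rw [h0, Nat.cast_zero, Real.log_zero, zero_div]
      exact div_nonneg (Real.log_nonneg (one_le_pow₀ (by simp))) n.cast_nonneg
    · gcongr
      exact_mod_cast h n
  have hf : Tendsto (fun n : ℕ => Real.log (sftWordCount V A n) / n) atTop (nhds 0) :=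
    tendsto_of_tendsto_of_tendsto_of_le_of_le tendsto_const_nhds hlog
      (fun n => div_nonneg (Real.log_natCast_nonneg _) n.cast_nonneg) hle
  exact hf.limsup_eq.le

theorem exists_isFirstReturn_ne [Fintype V] (hpos : 0 < sftEntropy V A) :
    ∃ p r r', IsFirstReturn A p r ∧ IsFirstReturn A p r' ∧ r ≠ r' := by
  by_contra! huniq
  exact hpos.not_ge (sftEntropy_nonpos_of_wordCount_le (sftWordCount_le_pow huniq))

end Words

section Parsing

variable {V ι : Type*} {p : V}

theorem append_inj_of_notMem {s t X Y : List V} (hs : p ∉ s) (ht : p ∉ t)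
    (hX : ∀ x ∈ X.head?, x = p) (hY : ∀ y ∈ Y.head?, y = p) (h : s ++ X = t ++ Y) :
    s = t ∧ X = Y := by
  rcases List.append_eq_append_iff.mp h with ⟨_ | ⟨x, as⟩, rfl, rfl⟩ | ⟨_ | ⟨y, bs⟩, rfl, rfl⟩
  · simp
  · exact absurd (by simp [hX x (by simp)]) ht
  · simp
  · exact absurd (by simp [hY y (by simp)]) hs

variable {r : ι → List V}

theorem head?_flatten_map_cons (ts : List ι) :
    ∀ x ∈ ((ts.map fun i => p :: r i).flatten).head?, x = p := by
  cases ts <;> simp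

theorem exists_eq_flatten_take (hr : ∀ i, p ∉ r i) {ts : List ι} {u w : List V}
    (h : (ts.map fun i => p :: r i).flatten = u ++ p :: w) :
    ∃ k, u = ((ts.take k).map fun i => p :: r i).flatten := by
  induction ts generalizing u with
  | nil => simp at h
  | cons a ts ih =>
    rcases u with _ | ⟨x, u⟩
    · exact ⟨0, rfl⟩
    simp only [List.map_cons, List.flatten_cons, List.cons_append, List.cons.injEq] at h
    obtain ⟨rfl, h⟩ := h
    rcases List.append_eq_append_iff.mp h with ⟨as, rfl, hF⟩ | ⟨_ | ⟨y, bs⟩, hra, hw⟩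
    · obtain ⟨k, rfl⟩ := ih hF
      exact ⟨k + 1, by simp⟩
    · exact ⟨1, by simp_all⟩
    · obtain ⟨rfl, -⟩ := List.cons_eq_cons.mp hw
      exact absurd (by simp [hra]) (hr a)

theorem prefix_of_flatten_eq (hr : ∀ i, p ∉ r i) (hinj : Function.Injective r)
    {xs ys : List ι} {w : List V}
    (h : (xs.map fun i => p :: r i).flatten = (ys.map fun i => p :: r i).flatten ++ p :: w) :
    ys <+: xs := by
  induction ys generalizing xs with
  | nil => exact List.nil_prefix
  | cons b ys ih =>
    rcases xs with _ | ⟨a, xs⟩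
    · simp at h
    simp only [List.map_cons, List.flatten_cons, List.cons_append, List.cons.injEq, true_and,
      List.append_assoc] at h
    obtain ⟨hab, hF⟩ := append_inj_of_notMem (hr a) (hr b) (head?_flatten_map_cons xs)
      (by cases ys <;> simp) h
    obtain rfl := hinj hab
    exact (List.prefix_cons_inj a).2 (ih hF)

theorem isChain_flatten_map_append {A : V → V → Prop} (hr : ∀ i, IsFirstReturn A p (r i))
    (ts : List ι) : ((ts.map fun i => p :: r i).flatten ++ [p]).IsChain A := by
  induction ts with
  | nil => exact List.isChain_singleton p
  | cons a ts ih =>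
    rw [List.map_cons, List.flatten_cons, List.append_assoc]
    refine List.isChain_append.2 ⟨(hr a).1.left_of_append, ih, fun x hx y hy => ?_⟩
    obtain rfl : y = p := by cases ts <;> simp_all
    exact (List.isChain_append.1 (hr a).1).2.2 x hx y (by simp)

end Parsing

/-- Blocks carry the bit `b` as cycle types `[b, !b]` so that both blocks have the same length;
the prefix `[false, false, true]` then occurs in a concatenation of patterns only at its seams. -/
def pattern (b : Bool) : List Bool := [false, false, true, b, !b]

theorem pattern_rigid {b b₁ b₂ : Bool} {k : ℕ}
    (h : (pattern b).take 4 <+: (pattern b₁ ++ pattern b₂).drop k) :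
    k = 0 ∧ b = b₁ ∨ k = 5 ∧ b = b₂ := by
  have key : ∀ b b₁ b₂ : Bool, ∀ k < 10, (pattern b).take 4 <+: (pattern b₁ ++ pattern b₂).drop k →
      k = 0 ∧ b = b₁ ∨ k = 5 ∧ b = b₂ := by
    decide
  rcases lt_or_ge k 10 with hk | hk
  · exact key b b₁ b₂ k hk h
  · rw [List.drop_eq_nil_of_le (by simp [pattern]; omega)] at h
    simp [pattern] at h

section Blocks

variable {V : Type*} {A : V → V → Prop} (p : V) (r : Bool → List V)

def block (b : Bool) : List V := ((pattern b).map fun i => p :: r i).flatten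

def blockLength : ℕ := (block p r false).length

def blockStream (s : ℕ → Bool) (m : ℕ) : V :=
  (block p r (s (m / blockLength p r))).getD (m % blockLength p r) p

open scoped Classical in
noncomputable def blockSign (x : ℕ → V) : ℝ :=
  if List.ofFn (fun o : Fin (blockLength p r) => x o) = block p r false then 1
  else if List.ofFn (fun o : Fin (blockLength p r) => x o) = block p r true then -1
  else 0

/-- With `D = blockLength p r`, block `j ≥ 1` of the stream starts at position `n = j * D + 1 - D`
of this point and carries the sign of `μ n`. -/
def moebiusPoint (n : ℕ) : V :=
  blockStream p r (fun j => decide (moebius (j * blockLength p r + 1 - blockLength p r) < 0))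
    (n + (blockLength p r - 1))

theorem length_block (b : Bool) : (block p r b).length = blockLength p r := by
  cases b <;> simp [blockLength, block, pattern]
  omega

theorem blockLength_pos : 0 < blockLength p r := by
  simp [blockLength, block, pattern]

theorem continuous_blockSign [TopologicalSpace V] [DiscreteTopology V] :
    Continuous (blockSign p r) := by
  classical
  exact continuous_of_discreteTopology.comp (continuous_pi fun o : Fin (blockLength p r) =>
    continuous_apply (o : ℕ)) (g := fun y => if List.ofFn y = block p r false then 1
      else if List.ofFn y = block p r true then -1 else 0)

variable {p r}

theorem eq_nil_of_block_append_block_eq (hr : ∀ b, p ∉ r b) (hne : r false ≠ r true)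
    {b b₁ b₂ : Bool} {u v : List V} (h : block p r b₁ ++ block p r b₂ = u ++ block p r b ++ v)
    (hu : u.length < blockLength p r) : u = [] ∧ b = b₁ := by
  set ts := pattern b₁ ++ pattern b₂
  have hts : block p r b₁ ++ block p r b₂ = (ts.map fun i => p :: r i).flatten := by
    simp [block, ts]
  obtain ⟨w, hw⟩ : ∃ w, block p r b = p :: w := ⟨(block p r b).tail, by simp [block, pattern]⟩
  obtain ⟨k, rfl⟩ := exists_eq_flatten_take hr (u := u) (w := w ++ v)
    (by rw [← hts, h, hw]; simp)
  have hdrop : ((ts.drop k).map fun i => p :: r i).flatten = block p r b ++ v := by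
    rw [hts, ← List.take_append_drop k ts, List.map_append, List.flatten_append,
      List.append_assoc, List.take_append_drop] at h
    exact List.append_cancel_left h
  have hpre := prefix_of_flatten_eq hr (Bool.injective_iff.2 hne) (ys := (pattern b).take 4)
    (w := r (!b) ++ v) (hdrop.trans (by simp [block, pattern]))
  rcases pattern_rigid hpre with ⟨rfl, rfl⟩ | ⟨rfl, -⟩
  · simp
  · rw [show ts.take 5 = pattern b₁ from List.take_left' rfl] at hu
    exact absurd ((length_block p r b₁).symm.trans_lt hu) (lt_irrefl _)

theorem block_injective (hr : ∀ b, p ∉ r b) (hne : r false ≠ r true) :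
    Function.Injective (block p r) := fun b b' h =>
  (eq_nil_of_block_append_block_eq hr hne (u := []) (v := block p r b) (b₂ := b)
    (by rw [h]; rfl) (blockLength_pos p r)).2.symm

theorem blockStream_mul_add (s : ℕ → Bool) (k : ℕ) {j : ℕ} (hj : j < 2 * blockLength p r) :
    blockStream p r s (k * blockLength p r + j) =
      (block p r (s k) ++ block p r (s (k + 1))).getD j p := by
  have hD := blockLength_pos p r
  have hdiv : ∀ k j, j < blockLength p r → blockStream p r s (k * blockLength p r + j) =
      (block p r (s k)).getD j p := fun k j hj => by
    rw [blockStream, add_comm, Nat.add_mul_div_right _ _ hD, Nat.div_eq_of_lt hj, zero_add,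
      Nat.add_mul_mod_self_right, Nat.mod_eq_of_lt hj]
  rcases lt_or_ge j (blockLength p r) with hjD | hjD
  · rw [List.getD_append _ _ _ _ (by rwa [length_block]), hdiv k j hjD]
  · obtain ⟨j, rfl⟩ := Nat.exists_eq_add_of_le hjD
    rw [List.getD_append_right _ _ _ _ (by rw [length_block]; omega), length_block,
      Nat.add_sub_cancel_left, ← add_assoc, ← Nat.succ_mul, hdiv _ j (by omega)]

theorem ofFn_blockStream (s : ℕ → Bool) (k : ℕ) {j : ℕ} (hj : j ≤ blockLength p r) :
    List.ofFn (fun o : Fin (blockLength p r) => blockStream p r s (k * blockLength p r + j + o)) =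
      ((block p r (s k) ++ block p r (s (k + 1))).drop j).take (blockLength p r) := by
  refine List.ext_getElem (by simp [length_block]; omega) fun o h₁ h₂ => ?_
  simp only [List.length_ofFn] at h₁
  rw [List.getElem_ofFn, List.getElem_take, List.getElem_drop, add_assoc,
    blockStream_mul_add s k (by omega), List.getD_eq_getElem]

theorem blockStream_adj (hr : ∀ b, IsFirstReturn A p (r b)) (s : ℕ → Bool) (m : ℕ) :
    A (blockStream p r s m) (blockStream p r s (m + 1)) := by
  have hD := blockLength_pos p r
  have hchain : (block p r (s (m / blockLength p r)) ++
      block p r (s (m / blockLength p r + 1))).IsChain A := by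
    simpa [block] using (isChain_flatten_map_append hr
      (pattern (s (m / blockLength p r)) ++ pattern (s (m / blockLength p r + 1)))).left_of_append
  have hm := Nat.mod_lt m hD
  rw [← Nat.div_add_mod' m (blockLength p r), add_assoc, blockStream_mul_add s _ (by omega),
    blockStream_mul_add s _ (by omega), List.getD_eq_getElem, List.getD_eq_getElem]
  exact hchain.getElem _ (by simp [length_block]; omega)

theorem dvd_of_ofFn_blockStream_eq (hr : ∀ b, p ∉ r b) (hne : r false ≠ r true)
    {s : ℕ → Bool} {m : ℕ} {b : Bool}
    (h : List.ofFn (fun o : Fin (blockLength p r) => blockStream p r s (m + o)) = block p r b) :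
    blockLength p r ∣ m ∧ s (m / blockLength p r) = b := by
  have hD := blockLength_pos p r
  have hj := Nat.mod_lt m hD
  rw [← Nat.div_add_mod' m (blockLength p r), ofFn_blockStream s _ hj.le] at h
  set j := m % blockLength p r
  set pair := block p r (s (m / blockLength p r)) ++ block p r (s (m / blockLength p r + 1))
  have hpair : pair.length = 2 * blockLength p r := by simp [pair, length_block]; omega
  have hsplit : pair = pair.take j ++ block p r b ++ (pair.drop j).drop (blockLength p r) := by
    rw [← h]; simp
  obtain ⟨hu, hb⟩ := eq_nil_of_block_append_block_eq hr hne hsplit (by simp; omega)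
  have hj0 : j = 0 := by simpa [hpair, hD.ne'] using congrArg List.length hu
  exact ⟨Nat.dvd_of_mod_eq_zero hj0, hb.symm⟩

theorem blockSign_blockStream (hr : ∀ b, p ∉ r b) (hne : r false ≠ r true) (s : ℕ → Bool)
    (m : ℕ) : blockSign p r (fun o => blockStream p r s (m + o)) =
      if blockLength p r ∣ m then (if s (m / blockLength p r) then -1 else 1) else 0 := by
  have hD := blockLength_pos p r
  by_cases hm : blockLength p r ∣ m
  · obtain ⟨k, rfl⟩ := hm
    have hread : List.ofFn (fun o : Fin (blockLength p r) =>
        blockStream p r s (blockLength p r * k + o)) = block p r (s k) := by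
      have := ofFn_blockStream (p := p) (r := r) s k (Nat.zero_le _)
      rw [add_zero, List.drop_zero, List.take_left' (length_block p r _)] at this
      simpa [mul_comm] using this
    have hft : block p r true ≠ block p r false := (block_injective hr hne).ne (by decide)
    cases hk : s k <;> simp [blockSign, hread, hk, hD, hft]
  · have hread : ∀ b, List.ofFn (fun o : Fin (blockLength p r) => blockStream p r s (m + o)) ≠
        block p r b := fun b h => hm (dvd_of_ofFn_blockStream_eq hr hne h).1
    simp [blockSign, hread, hm]

theorem moebiusPoint_adj (hr : ∀ b, IsFirstReturn A p (r b)) (n : ℕ) :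
    A (moebiusPoint p r n) (moebiusPoint p r (n + 1)) := by
  simpa only [moebiusPoint, add_right_comm] using blockStream_adj hr _ (n + (blockLength p r - 1))

theorem moebius_mul_blockSign_moebiusPoint (hr : ∀ b, p ∉ r b) (hne : r false ≠ r true)
    (n : ℕ) : (moebius n : ℝ) * blockSign p r (fun i => moebiusPoint p r (n + i)) =
      if blockLength p r ∣ n + (blockLength p r - 1) then |(moebius n : ℝ)| else 0 := by
  set D := blockLength p r
  have hD : 0 < D := blockLength_pos p r
  rw [show (fun i => moebiusPoint p r (n + i)) = fun i => blockStream p r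
      (fun j => decide (moebius (j * D + 1 - D) < 0)) (n + (D - 1) + i) by
    funext i; rw [moebiusPoint, add_right_comm], blockSign_blockStream hr hne]
  by_cases hdvd : D ∣ n + (D - 1)
  · rw [if_pos hdvd, if_pos hdvd, Nat.div_mul_cancel hdvd, show n + (D - 1) + 1 - D = n by omega]
    rcases lt_or_ge (moebius n) 0 with h | h
    · simp [h, abs_of_neg (Int.cast_lt_zero.2 h)]
    · simp [h.not_gt, abs_of_nonneg (by exact_mod_cast h : (0 : ℝ) ≤ moebius n)]
  · rw [if_neg hdvd, if_neg hdvd, mul_zero]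

end Blocks

section Sieve

theorem card_filter_dvd_mul_add_one_le (M D m : ℕ) :
    #{k ∈ range M | m ∣ k * D + 1} ≤ M / m + 1 := by
  have hmod : ∀ k ∈ {k ∈ range M | m ∣ k * D + 1}, ∀ k' ∈ {k ∈ range M | m ∣ k * D + 1},
      k % m = k' % m := by
    intro k hk k' hk'
    simp only [mem_filter] at hk hk'
    have hcop : Nat.Coprime m D := (((Nat.coprime_mul_right_add_right D 1 k).2
      (Nat.coprime_one_right D)).coprime_dvd_right hk.2).symm
    exact Nat.ModEq.cancel_right_of_coprime hcop (Nat.ModEq.add_right_cancel' 1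
      ((Nat.modEq_zero_iff_dvd.2 hk.2).trans (Nat.modEq_zero_iff_dvd.2 hk'.2).symm))
  calc #{k ∈ range M | m ∣ k * D + 1} ≤ #(range (M / m + 1)) := by
        refine card_le_card_of_injOn (· / m) (fun k hk => ?_) (fun k hk k' hk' h => ?_)
        · simp only [coe_filter, Set.mem_ofPred_eq, mem_range, coe_range, Set.mem_Iio] at hk ⊢
          exact Nat.lt_succ_of_le (Nat.div_le_div_right hk.1.le)
        · rw [← Nat.div_add_mod k m, ← Nat.div_add_mod k' m, hmod k hk k' hk']
          exact congrArg (m * · + k' % m) h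
    _ = M / m + 1 := card_range _

theorem sum_inv_sq_le_of_prime {s : Finset ℕ} (hs : ∀ p ∈ s, p.Prime) :
    ∑ p ∈ s, ((p : ℝ) ^ 2)⁻¹ ≤ 11 / 12 := by
  have hsub : s ⊆ insert 2 (Ioo 2 (s.sup id + 1)) := fun p hp => by
    have hK : p < s.sup id + 1 := Nat.lt_succ_of_le (le_sup (f := id) hp)
    rcases (hs p hp).two_le.eq_or_lt with h | h
    · simp [← h]
    · simp [h, hK]
  calc ∑ p ∈ s, ((p : ℝ) ^ 2)⁻¹ ≤ ∑ p ∈ insert 2 (Ioo 2 (s.sup id + 1)), ((p : ℝ) ^ 2)⁻¹ :=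
        sum_le_sum_of_subset_of_nonneg hsub fun _ _ _ => by positivity
    _ = 1 / 4 + ∑ p ∈ Ioo 2 (s.sup id + 1), ((p : ℝ) ^ 2)⁻¹ := by
        rw [sum_insert (by simp)]; norm_num
    _ ≤ 1 / 4 + 2 / (2 + 1) := by gcongr; exact_mod_cast sum_Ioo_inv_sq_le 2 _
    _ = 11 / 12 := by norm_num

theorem card_filter_not_squarefree_le (M D : ℕ) :
    (#{k ∈ range M | ¬Squarefree (k * D + 1)} : ℝ) ≤
      11 / 12 * M + (Nat.sqrt (M * D + 1) + 1) := by
  set R := Nat.sqrt (M * D + 1)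
  set P := {p ∈ range (R + 1) | p.Prime}
  have hsub : {k ∈ range M | ¬Squarefree (k * D + 1)} ⊆
      P.biUnion fun p => {k ∈ range M | p * p ∣ k * D + 1} := by
    intro k hk
    simp only [mem_filter, mem_range] at hk
    obtain ⟨p, hp, hpk⟩ : ∃ p, p.Prime ∧ p * p ∣ k * D + 1 := by
      simpa [Nat.squarefree_iff_prime_squarefree] using hk.2
    have hpR : p ≤ R := Nat.le_sqrt.2 ((Nat.le_of_dvd (by omega) hpk).trans
      (by gcongr; exact hk.1.le))
    simp only [P, mem_biUnion, mem_filter, mem_range]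
    exact ⟨p, ⟨by omega, hp⟩, hk.1, hpk⟩
  have hcard : #{k ∈ range M | ¬Squarefree (k * D + 1)} ≤ ∑ p ∈ P, (M / (p * p) + 1) :=
    (card_le_card hsub).trans (card_biUnion_le.trans
      (sum_le_sum fun p _ => card_filter_dvd_mul_add_one_le M D (p * p)))
  have hP : #P ≤ R + 1 := (card_filter_le _ _).trans (card_range _).le
  calc (#{k ∈ range M | ¬Squarefree (k * D + 1)} : ℝ)
      ≤ ∑ p ∈ P, (((M / (p * p) : ℕ) : ℝ) + 1) := by exact_mod_cast hcard
    _ ≤ ∑ p ∈ P, (M * ((p : ℝ) ^ 2)⁻¹ + 1) := sum_le_sum fun p _ => by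
        gcongr
        exact Nat.cast_div_le.trans (by simp [div_eq_mul_inv, sq])
    _ = M * ∑ p ∈ P, ((p : ℝ) ^ 2)⁻¹ + #P := by rw [sum_add_distrib, mul_sum]; simp
    _ ≤ M * (11 / 12) + (R + 1) := by
        gcongr
        · exact sum_inv_sq_le_of_prime fun p hp => (mem_filter.1 hp).2
        · exact_mod_cast hP
    _ = 11 / 12 * M + (R + 1) := by ring

theorem eventually_le_card_filter_squarefree (D : ℕ) :
    ∀ᶠ M : ℕ in atTop, (M : ℝ) / 24 ≤ #{k ∈ range M | Squarefree (k * D + 1)} := by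
  filter_upwards [eventually_ge_atTop (48 ^ 2 * (D + 1))] with M hM
  have hsplit := card_filter_add_card_filter_not (s := range M)
    (fun k => Squarefree (k * D + 1))
  rw [card_range] at hsplit
  have hR : 24 * (Nat.sqrt (M * D + 1) + 1) ≤ M := by
    have h1 := Nat.sqrt_le (M * D + 1)
    have h2 : 48 * Nat.sqrt (M * D + 1) ≤ M := by
      by_contra! h
      nlinarith [Nat.mul_self_lt_mul_self h]
    omega
  have hR' : ((Nat.sqrt (M * D + 1) : ℕ) : ℝ) + 1 ≤ M / 24 := by
    rw [le_div_iff₀ (by norm_num)]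
    exact_mod_cast (by omega : (Nat.sqrt (M * D + 1) + 1) * 24 ≤ M)
  have := card_filter_not_squarefree_le M D
  have hsplit' : (#{k ∈ range M | Squarefree (k * D + 1)} : ℝ) +
      #{k ∈ range M | ¬Squarefree (k * D + 1)} = M := by exact_mod_cast hsplit
  linarith

theorem card_filter_squarefree_le_sum_Icc {D : ℕ} (hD : 0 < D) {g : ℕ → ℝ}
    (hg0 : ∀ n, 0 ≤ g n) (hsq : ∀ k, Squarefree (k * D + 1) → 1 ≤ g (k * D + 1)) (N : ℕ) :
    (#{k ∈ range (N / D) | Squarefree (k * D + 1)} : ℝ) ≤ ∑ n ∈ Icc 1 N, g n := by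
  have hsub : (range (N / D)).image (· * D + 1) ⊆ Icc 1 N := by
    intro n hn
    obtain ⟨k, hk, rfl⟩ := mem_image.1 hn
    have := (Nat.le_div_iff_mul_le hD).1 (mem_range.1 hk)
    rw [Nat.succ_mul] at this
    exact mem_Icc.2 ⟨by omega, by omega⟩
  calc (#{k ∈ range (N / D) | Squarefree (k * D + 1)} : ℝ)
      = ∑ k ∈ range (N / D), if Squarefree (k * D + 1) then (1 : ℝ) else 0 := by
        rw [sum_boole]
    _ ≤ ∑ k ∈ range (N / D), g (k * D + 1) := sum_le_sum fun k _ => by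
        split_ifs with h
        exacts [hsq k h, hg0 _]
    _ = ∑ n ∈ (range (N / D)).image (· * D + 1), g n :=
        (sum_image fun a _ b _ h => by simpa [hD.ne'] using h).symm
    _ ≤ ∑ n ∈ Icc 1 N, g n := sum_le_sum_of_subset_of_nonneg hsub fun n _ _ => hg0 n

theorem limsup_average_pos {D : ℕ} (hD : 0 < D) {g : ℕ → ℝ} (hg0 : ∀ n, 0 ≤ g n)
    (hg1 : ∀ n, g n ≤ 1) (hsq : ∀ k, Squarefree (k * D + 1) → 1 ≤ g (k * D + 1)) :
    0 < limsup (fun N : ℕ => (1 / N : ℝ) * ∑ n ∈ Icc 1 N, g n) atTop := by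
  obtain ⟨M₀, hM₀⟩ := eventually_atTop.1 (eventually_le_card_filter_squarefree D)
  have hlow : ∀ N ≥ D * (M₀ + 2), 1 / (48 * D) ≤ (1 / N : ℝ) * ∑ n ∈ Icc 1 N, g n := by
    intro N hN
    have hq := hM₀ (N / D) ((Nat.le_div_iff_mul_le hD).2 (by nlinarith))
    have hsum := card_filter_squarefree_le_sum_Icc hD hg0 hsq N
    have hN : (N : ℝ) ≤ 2 * D * (N / D : ℕ) := by
      have := Nat.lt_div_mul_add (a := N) hD
      exact_mod_cast (by nlinarith : N ≤ 2 * D * (N / D))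
    have hNpos : (0 : ℝ) < N := by exact_mod_cast (by nlinarith : 0 < N)
    rw [one_div_mul_eq_div, div_le_div_iff₀ (by positivity) hNpos]
    nlinarith
  have hup : ∀ N : ℕ, (1 / N : ℝ) * ∑ n ∈ Icc 1 N, g n ≤ 1 := by
    intro N
    rcases N.eq_zero_or_pos with rfl | hN
    · simp
    calc (1 / N : ℝ) * ∑ n ∈ Icc 1 N, g n ≤ (1 / N : ℝ) * N := by
          gcongr
          simpa using sum_le_sum fun n (_ : n ∈ Icc 1 N) => hg1 n
      _ = 1 := by field_simp
  exact (by positivity : (0 : ℝ) < 1 / (48 * D)).trans_le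
    (le_limsup_of_frequently_le (eventually_atTop.2 ⟨_, hlow⟩).frequently
      (isBoundedUnder_of ⟨1, hup⟩))

end Sieve

end MoebiusSFT

open MoebiusSFT

/-- Main theorem: a one-sided subshift of finite type with positive topological
entropy is not Möbius orthogonal: there are a point `z` of the subshift and a
continuous test function `φ` whose Möbius correlations do not tend to `0`. -/
theorem sft_positive_entropy_not_moebius_orthogonal
    {V : Type*} [Fintype V] [TopologicalSpace V] [DiscreteTopology V]
    (A : V → V → Prop) (hpos : 0 < sftEntropy V A) :
    ∃ z : ℕ → V, (∀ n : ℕ, A (z n) (z (n + 1))) ∧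
      ∃ φ : (ℕ → V) → ℝ, Continuous φ ∧
        0 < Filter.limsup
          (fun N : ℕ => (1 / N : ℝ) *
            ∑ n ∈ Finset.Icc 1 N, (moebius n : ℝ) * φ (fun i => z (n + i)))
          Filter.atTop := by
  obtain ⟨p, r₀, r₁, h₀, h₁, hne⟩ := exists_isFirstReturn_ne hpos
  let r : Bool → List V := fun b => cond b r₁ r₀
  have hr : ∀ b, IsFirstReturn A p (r b) := Bool.forall_bool.2 ⟨h₀, h₁⟩
  have hD := blockLength_pos p r
  refine ⟨moebiusPoint p r, moebiusPoint_adj hr, blockSign p r, continuous_blockSign p r, ?_⟩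
  simp only [moebius_mul_blockSign_moebiusPoint (fun b => (hr b).2) hne]
  refine limsup_average_pos hD (fun n => by positivity) (fun n => ?_) (fun k hk => ?_)
  · split_ifs
    · exact_mod_cast abs_moebius_le_one
    · exact zero_le_one
  · rw [if_pos ⟨k + 1, by rw [Nat.mul_add, mul_comm]; omega⟩, ← Int.cast_abs,
      abs_moebius_eq_one_of_squarefree hk, Int.cast_one]
end

section
/- Let γ'_1 and γ'_2 be two distinct finite words over alphabet V, each beginning with a symbol v that occurs nowhere else in either word, with v occurring exactly once in each. Then the words x = γ'_1 γ'_1 γ'_2 γ'_2 γ'_1 and y = γ'_1 γ'_2 γ'_1 γ'_2 γ'_1 are distinct, have equal length l = 3|γ'_1| + 2|γ'_2|, and have the recognizability property: in any concatenation of two words from {x, y}, the only occurrences of x or y as factors are at positions 0 and l. -/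
/-!
Call a word a marker block if it is `v :: t` with `v ∉ t`. In a concatenation of marker blocks
the symbol `v` occurs exactly at the block boundaries, so an occurrence of one such
concatenation inside another starts at a block boundary and, up to its last block, matches the
blocks there one by one. Since `γ₁ ≠ γ₂`, the question thus reduces to the binary words
`00110` and `01010`, for which it is a finite check.
-/

namespace MarkerWords

variable {V : Type*} {v : V}

def IsMarkerBlock (v : V) (b : List V) : Prop := ∃ t, b = v :: t ∧ v ∉ t

theorem IsMarkerBlock.of_head?_of_count [DecidableEq V] {b : List V}
    (h : b.head? = some v) (hc : b.count v = 1) : IsMarkerBlock v b := by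
  obtain _ | ⟨a, t⟩ := b
  · simp at h
  · obtain rfl : a = v := by simpa using h
    exact ⟨t, rfl, List.count_eq_zero.mp (by simpa [List.count_cons] using hc)⟩

theorem IsMarkerBlock.ne_nil {b : List V} (hb : IsMarkerBlock v b) : b ≠ [] := by
  obtain ⟨t, rfl, -⟩ := hb
  exact List.cons_ne_nil v t

theorem IsMarkerBlock.eq_nil_of_append {b a : List V} (hba : IsMarkerBlock v (b ++ a))
    (hb : b ≠ []) (ha : ∀ x ∈ a.head?, x = v) : a = [] := by
  obtain _ | ⟨x, a⟩ := a
  · rfl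
  obtain rfl : x = v := ha x rfl
  obtain ⟨t, ht, hvt⟩ := hba
  obtain _ | ⟨y, b⟩ := b
  · exact absurd rfl hb
  · simp only [List.cons_append, List.cons.injEq] at ht
    exact absurd (ht.2 ▸ by simp) hvt

theorem IsMarkerBlock.eq_of_append_eq {b c s t : List V} (hb : IsMarkerBlock v b)
    (hc : IsMarkerBlock v c) (hs : ∀ x ∈ s.head?, x = v) (ht : ∀ x ∈ t.head?, x = v)
    (h : b ++ s = c ++ t) : b = c := by
  have head?_of_append {a u : List V} {x : V} (hx : x ∈ a.head?) : x ∈ (a ++ u).head? := by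
    simp [List.head?_append, Option.mem_def.mp hx]
  rcases List.append_eq_append_iff.mp h with ⟨a, rfl, rfl⟩ | ⟨a, rfl, rfl⟩
  · rw [hc.eq_nil_of_append hb.ne_nil fun x hx => hs x (head?_of_append hx), List.append_nil]
  · rw [hb.eq_nil_of_append hc.ne_nil fun x hx => ht x (head?_of_append hx), List.append_nil]

theorem head?_flatten_of_isMarkerBlock {bs : List (List V)} (hbs : ∀ b ∈ bs, IsMarkerBlock v b) :
    ∀ x ∈ bs.flatten.head?, x = v := by
  obtain _ | ⟨b, bs⟩ := bs
  · simp
  · obtain ⟨t, rfl, -⟩ := hbs b List.mem_cons_self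
    simp

theorem dropLast_prefix_of_flatten_prefix {bs cs : List (List V)}
    (hbs : ∀ b ∈ bs, IsMarkerBlock v b) (hcs : ∀ c ∈ cs, IsMarkerBlock v c)
    (h : bs.flatten <+: cs.flatten) : bs.dropLast <+: cs := by
  induction bs generalizing cs with
  | nil => simp
  | cons b bs ih =>
    obtain _ | ⟨b', bs'⟩ := bs
    · simp
    obtain ⟨u, hu⟩ := h
    obtain _ | ⟨c, cs⟩ := cs
    · simp [(hbs b List.mem_cons_self).ne_nil] at hu
    simp only [List.flatten_cons, List.append_assoc] at hu
    obtain ⟨t', rfl, -⟩ := hbs b' (by simp)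
    have hbc : b = c := (hbs b List.mem_cons_self).eq_of_append_eq (hcs c List.mem_cons_self)
      (by simp) (head?_flatten_of_isMarkerBlock fun c hc => hcs c (List.mem_cons_of_mem _ hc)) hu
    subst hbc
    rw [List.dropLast_cons_cons, List.cons_prefix_cons]
    refine ⟨rfl, ih (fun b hb => hbs b (List.mem_cons_of_mem _ hb))
      (fun c hc => hcs c (List.mem_cons_of_mem _ hc)) ⟨u, ?_⟩⟩
    simpa [List.append_assoc] using List.append_cancel_left hu

/-- In a concatenation of marker blocks, `v` occurs only at block boundaries. -/
theorem exists_drop_flatten_of_head?_drop {bs : List (List V)}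
    (hbs : ∀ b ∈ bs, IsMarkerBlock v b) {i : ℕ} (hi : (bs.flatten.drop i).head? = some v) :
    ∃ k, i = (bs.take k).flatten.length ∧ bs.flatten.drop i = (bs.drop k).flatten := by
  induction bs generalizing i with
  | nil => simp at hi
  | cons b bs ih =>
    obtain ⟨t, rfl, hvt⟩ := hbs b List.mem_cons_self
    obtain _ | j := i
    · exact ⟨0, by simp⟩
    simp only [List.flatten_cons, List.cons_append, List.drop_succ_cons, List.drop_append] at hi ⊢
    by_cases hj : j < t.length
    · rw [List.drop_eq_getElem_cons hj] at hi
      rw [List.cons_append, List.head?_cons, Option.some.injEq] at hi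
      exact absurd (hi ▸ List.getElem_mem hj) hvt
    obtain ⟨k, hk, hdrop⟩ := ih (fun b hb => hbs b (List.mem_cons_of_mem _ hb))
      (i := j - t.length) (by simpa [List.drop_eq_nil_of_le (not_lt.mp hj)] using hi)
    refine ⟨k + 1, ?_, ?_⟩
    · simp only [List.take_succ_cons, List.flatten_cons, List.length_append, List.length_cons]
      omega
    · simp [List.drop_eq_nil_of_le (not_lt.mp hj), hdrop]

theorem exists_block_shift_of_prefix_drop {bs cs : List (List V)}
    (hbs : ∀ b ∈ bs, IsMarkerBlock v b) (hcs : ∀ c ∈ cs, IsMarkerBlock v c) (hne : cs ≠ [])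
    {i : ℕ} (h : cs.flatten <+: bs.flatten.drop i) :
    ∃ k, i = (bs.take k).flatten.length ∧ cs.dropLast <+: bs.drop k := by
  obtain _ | ⟨c, cs'⟩ := cs
  · exact absurd rfl hne
  obtain ⟨t, rfl, -⟩ := hcs _ List.mem_cons_self
  obtain ⟨u, hu⟩ := h
  obtain ⟨k, hk, hdrop⟩ := exists_drop_flatten_of_head?_drop hbs (i := i) (by simp [← hu])
  refine ⟨k, hk, dropLast_prefix_of_flatten_prefix hcs
    (fun b hb => hbs b (List.mem_of_mem_drop hb)) ⟨u, hu.trans hdrop⟩⟩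

def binaryX : List Bool := [false, false, true, true, false]

def binaryY : List Bool := [false, true, false, true, false]

theorem binary_recognizable {p q r : List Bool} (hp : p = binaryX ∨ p = binaryY)
    (hq : q = binaryX ∨ q = binaryY) (hr : r = binaryX ∨ r = binaryY) {k : ℕ}
    (h : r.dropLast <+: (p ++ q).drop k) : k = 0 ∨ k = p.length := by
  have hk : k < 7 := by
    have := h.length_le
    rcases hp with rfl | rfl <;> rcases hq with rfl | rfl <;> rcases hr with rfl | rfl <;>
      simp [binaryX, binaryY] at this <;> omega
  revert h
  rcases hp with rfl | rfl <;> rcases hq with rfl | rfl <;> rcases hr with rfl | rfl <;>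
    interval_cases k <;> decide

def blocks (γ₁ γ₂ : List V) (p : List Bool) : List (List V) :=
  p.map fun b => bif b then γ₂ else γ₁

theorem blocks_append (γ₁ γ₂ : List V) (p q : List Bool) :
    blocks γ₁ γ₂ (p ++ q) = blocks γ₁ γ₂ p ++ blocks γ₁ γ₂ q :=
  List.map_append

theorem length_blocks (γ₁ γ₂ : List V) (p : List Bool) : (blocks γ₁ γ₂ p).length = p.length :=
  List.length_map _

theorem blocks_dropLast (γ₁ γ₂ : List V) (p : List Bool) :
    blocks γ₁ γ₂ p.dropLast = (blocks γ₁ γ₂ p).dropLast :=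
  List.map_dropLast

theorem blocks_drop (γ₁ γ₂ : List V) (p : List Bool) (k : ℕ) :
    blocks γ₁ γ₂ (p.drop k) = (blocks γ₁ γ₂ p).drop k :=
  List.map_drop

theorem isMarkerBlock_of_mem_blocks {γ₁ γ₂ : List V} (h₁ : IsMarkerBlock v γ₁)
    (h₂ : IsMarkerBlock v γ₂) (p : List Bool) : ∀ b ∈ blocks γ₁ γ₂ p, IsMarkerBlock v b := by
  simp only [blocks, List.mem_map]
  rintro b ⟨_ | _, -, rfl⟩
  exacts [h₁, h₂]

theorem prefix_of_blocks_prefix {γ₁ γ₂ : List V} (hne : γ₁ ≠ γ₂) {p q : List Bool}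
    (h : blocks γ₁ γ₂ p <+: blocks γ₁ γ₂ q) : p <+: q := by
  obtain ⟨p', hp', hmap⟩ := List.prefix_map_iff.mp h
  have hinj : Function.Injective fun b : Bool => bif b then γ₂ else γ₁ := by
    rintro (_ | _) (_ | _) hb <;> simp_all [eq_comm]
  rwa [List.map_injective_iff.mpr hinj hmap]

theorem eq_zero_or_eq_length_of_blocks_prefix_drop {γ₁ γ₂ : List V}
    (h₁ : IsMarkerBlock v γ₁) (h₂ : IsMarkerBlock v γ₂) (hne : γ₁ ≠ γ₂) {p q r : List Bool}
    (hp : p = binaryX ∨ p = binaryY) (hq : q = binaryX ∨ q = binaryY)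
    (hr : r = binaryX ∨ r = binaryY) {i : ℕ}
    (h : (blocks γ₁ γ₂ r).flatten <+: (blocks γ₁ γ₂ (p ++ q)).flatten.drop i) :
    i = 0 ∨ i = (blocks γ₁ γ₂ p).flatten.length := by
  have hr₀ : blocks γ₁ γ₂ r ≠ [] := by rcases hr with rfl | rfl <;> simp [blocks, binaryX, binaryY]
  obtain ⟨k, rfl, hpre⟩ := exists_block_shift_of_prefix_drop
    (isMarkerBlock_of_mem_blocks h₁ h₂ _) (isMarkerBlock_of_mem_blocks h₁ h₂ _) hr₀ h
  rw [← blocks_dropLast, ← blocks_drop] at hpre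
  rcases binary_recognizable hp hq hr (prefix_of_blocks_prefix hne hpre) with rfl | rfl
  · simp
  · rw [blocks_append, List.take_left' (length_blocks γ₁ γ₂ p)]
    exact Or.inr rfl

end MarkerWords

open MarkerWords in
/-- Lemma 2 construction: if `γ₁` and `γ₂` are distinct words each beginning with a
marker symbol `v` occurring exactly once in each, then `x = γ₁γ₁γ₂γ₂γ₁` and
`y = γ₁γ₂γ₁γ₂γ₁` are distinct words of common length `l = 3|γ₁| + 2|γ₂|` with the
recognizability property. -/
theorem marker_words_recognizable
    {V : Type*} [DecidableEq V] (v : V) (γ₁ γ₂ : List V)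
    (h₁ : γ₁.head? = some v) (h₂ : γ₂.head? = some v)
    (hc₁ : γ₁.count v = 1) (hc₂ : γ₂.count v = 1) (hne : γ₁ ≠ γ₂) :
    let x := γ₁ ++ γ₁ ++ γ₂ ++ γ₂ ++ γ₁
    let y := γ₁ ++ γ₂ ++ γ₁ ++ γ₂ ++ γ₁
    let l := 3 * γ₁.length + 2 * γ₂.length
    x ≠ y ∧ x.length = l ∧ y.length = l ∧
      ∀ u₁ u₂ w : List V, (u₁ = x ∨ u₁ = y) → (u₂ = x ∨ u₂ = y) →
        (w = x ∨ w = y) → ∀ i : ℕ, i + l ≤ 2 * l →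
          ((u₁ ++ u₂).drop i).take l = w → i = 0 ∨ i = l := by
  intro x y l
  have hb₁ := IsMarkerBlock.of_head?_of_count h₁ hc₁
  have hb₂ := IsMarkerBlock.of_head?_of_count h₂ hc₂
  have hx : x = (blocks γ₁ γ₂ binaryX).flatten := by simp [x, blocks, binaryX]
  have hy : y = (blocks γ₁ γ₂ binaryY).flatten := by simp [y, blocks, binaryY]
  have hlen : ∀ p, (p = binaryX ∨ p = binaryY) → (blocks γ₁ γ₂ p).flatten.length = l := by
    rintro p (rfl | rfl) <;> simp [l, blocks, binaryX, binaryY] <;> ring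
  have hword : ∀ u, (u = x ∨ u = y) →
      ∃ p, (p = binaryX ∨ p = binaryY) ∧ u = (blocks γ₁ γ₂ p).flatten := by
    rintro u (rfl | rfl)
    exacts [⟨_, .inl rfl, hx⟩, ⟨_, .inr rfl, hy⟩]
  refine ⟨?_, hx ▸ hlen _ (.inl rfl), hy ▸ hlen _ (.inr rfl), ?_⟩
  · intro hxy
    rw [hx, hy] at hxy
    have := dropLast_prefix_of_flatten_prefix (isMarkerBlock_of_mem_blocks hb₁ hb₂ _)
      (isMarkerBlock_of_mem_blocks hb₁ hb₂ _) (hxy ▸ List.prefix_refl _ :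
      (blocks γ₁ γ₂ binaryX).flatten <+: (blocks γ₁ γ₂ binaryY).flatten)
    rw [← blocks_dropLast] at this
    exact absurd (prefix_of_blocks_prefix hne this) (by decide)
  · rintro u₁ u₂ w hu₁ hu₂ hw i - hi
    obtain ⟨p, hp, rfl⟩ := hword u₁ hu₁
    obtain ⟨q, hq, rfl⟩ := hword u₂ hu₂
    obtain ⟨r, hr, rfl⟩ := hword w hw
    rw [← hlen p hp]
    refine eq_zero_or_eq_length_of_blocks_prefix_drop hb₁ hb₂ hne hp hq hr ?_
    rw [blocks_append, List.flatten_append, ← hi]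
    exact List.take_prefix _ _
end

section
/- There exists a topological dynamical system (Y, T) with positive topological entropy, a point z ∈ Y, and a continuous function F : Y → ℝ with limsup_{N→∞} (1/N) |Σ_{n=1}^{N} μ(n) F(Tⁿ z)| > 0; that is, Sarnak's orthogonality conclusion fails for some positive-entropy system. -/
/-!
Take the full shift on the alphabet `SignType = {-1, 0, 1}`, the point `z = (sign μ(n))ₙ` and the
observable `F y = y 0`. Then `μ(n) F(Tⁿ z) = μ(n) sign μ(n) = |μ(n)|` is the indicator of the
squarefree numbers, which have lower density at least `1 - ∑_{k ≥ 2} 1/k² ≥ 1/12`. The shift has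
entropy at least `log 3 > 0`, since the `3ⁿ` words of length `n` give an `n`-dynamical net for the
entourage "same first symbol".
-/

open Filter Finset ArithmeticFunction
open Dynamics SymbolicDynamics.FullShift
open scoped ArithmeticFunction.Moebius

lemma card_filter_not_squarefree_le (N : ℕ) :
    #{n ∈ Ioc 0 N | ¬Squarefree n} ≤ ∑ k ∈ Ioc 1 N, N / (k * k) := by
  calc #{n ∈ Ioc 0 N | ¬Squarefree n}
      ≤ #((Ioc 1 N).biUnion fun k => {n ∈ Ioc 0 N | k * k ∣ n}) := by
        refine card_le_card fun n hn => ?_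
        obtain ⟨hnN, hn⟩ := mem_filter.1 hn
        obtain ⟨p, hp, hpn⟩ := by simpa [Nat.squarefree_iff_prime_squarefree] using hn
        have hpN : p ≤ N := (Nat.le_mul_self p).trans <|
          (Nat.le_of_dvd (mem_Ioc.1 hnN).1 hpn).trans (mem_Ioc.1 hnN).2
        exact mem_biUnion.2 ⟨p, mem_Ioc.2 ⟨hp.one_lt, hpN⟩, mem_filter.2 ⟨hnN, hpn⟩⟩
    _ ≤ ∑ k ∈ Ioc 1 N, #{n ∈ Ioc 0 N | k * k ∣ n} := card_biUnion_le
    _ = ∑ k ∈ Ioc 1 N, N / (k * k) := by simp only [Nat.Ioc_filter_dvd_card_eq_div]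

lemma sum_Ioc_one_inv_sq_le (N : ℕ) : ∑ k ∈ Ioc 1 N, ((k : ℝ) ^ 2)⁻¹ ≤ 11 / 12 := by
  have hsub : Ioc 1 N ⊆ insert 2 (Ioo 2 (N + 1)) := fun k hk => by
    simp only [mem_Ioc, mem_insert, mem_Ioo] at hk ⊢
    omega
  calc ∑ k ∈ Ioc 1 N, ((k : ℝ) ^ 2)⁻¹
      ≤ ∑ k ∈ insert 2 (Ioo 2 (N + 1)), ((k : ℝ) ^ 2)⁻¹ :=
        sum_le_sum_of_subset_of_nonneg hsub fun _ _ _ => by positivity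
    _ ≤ 11 / 12 := by
        rw [sum_insert (by simp)]
        have tail := sum_Ioo_inv_sq_le (α := ℝ) 2 (N + 1)
        norm_num at tail ⊢
        linarith

lemma le_card_filter_squarefree (N : ℕ) : (N : ℝ) / 12 ≤ #{n ∈ Icc 1 N | Squarefree n} := by
  rw [show Icc 1 N = Ioc 0 N from Icc_add_one_left_eq_Ioc 0 N]
  have hsplit : (N : ℝ) = #{n ∈ Ioc 0 N | Squarefree n} + #{n ∈ Ioc 0 N | ¬Squarefree n} := by
    have := card_filter_add_card_filter_not (s := Ioc 0 N) (p := Squarefree)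
    rw [Nat.card_Ioc, Nat.sub_zero] at this
    exact_mod_cast this.symm
  have hbad : (#{n ∈ Ioc 0 N | ¬Squarefree n} : ℝ) ≤ N * (11 / 12) :=
    calc (#{n ∈ Ioc 0 N | ¬Squarefree n} : ℝ)
        ≤ ∑ k ∈ Ioc 1 N, ((N / (k * k) : ℕ) : ℝ) := by
          exact_mod_cast card_filter_not_squarefree_le N
      _ ≤ ∑ k ∈ Ioc 1 N, N * ((k : ℝ) ^ 2)⁻¹ := sum_le_sum fun k _ => by
          simpa [sq, div_eq_mul_inv] using Nat.cast_div_le (α := ℝ) (m := N) (n := k * k)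
      _ ≤ N * (11 / 12) := by
          rw [← mul_sum]
          exact mul_le_mul_of_nonneg_left (sum_Ioc_one_inv_sq_le N) (by positivity)
  linarith

lemma limsup_squarefree_density_pos :
    0 < limsup (fun N : ℕ => (1 / N : ℝ) * #{n ∈ Icc 1 N | Squarefree n}) atTop := by
  have hdens : ∀ N : ℕ, 0 < N → 1 / 12 ≤ (1 / N : ℝ) * #{n ∈ Icc 1 N | Squarefree n} := by
    intro N hN
    rw [one_div_mul_eq_div, le_div_iff₀ (by positivity)]
    linarith [le_card_filter_squarefree N]
  have hle : ∀ N : ℕ, (1 / N : ℝ) * #{n ∈ Icc 1 N | Squarefree n} ≤ 1 := by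
    intro N
    rw [one_div_mul_eq_div]
    refine div_le_one_of_le₀ ?_ (by positivity)
    exact_mod_cast (card_filter_le _ _).trans (Nat.card_Icc 1 N).le
  calc (0 : ℝ) < 1 / 12 := by norm_num
    _ ≤ _ := le_limsup_of_frequently_le ((eventually_gt_atTop 0).mono hdens).frequently
        (isBoundedUnder_of ⟨1, hle⟩)

lemma sum_abs_moebius (s : Finset ℕ) : ∑ n ∈ s, (|μ n| : ℝ) = #{n ∈ s | Squarefree n} := by
  simp only [← Int.cast_abs, abs_moebius]
  push_cast
  rw [sum_boole]

section FullShift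

variable {A : Type*}

lemma shift_one_iterate (n : ℕ) (x : ℕ → A) : (shift 1)^[n] x = shift n x := by
  induction n generalizing x with
  | zero => ext; simp
  | succ n ih => rw [Function.iterate_succ_apply, ih, ← shift_add, add_comm]

lemma mem_ball_dynEntourage_shift_iff {n : ℕ} {x y : ℕ → A} :
    y ∈ UniformSpace.ball x (dynEntourage (shift 1) {p | p.1 0 = p.2 0} n) ↔
      ∀ k < n, x k = y k := by
  simp [UniformSpace.ball, mem_dynEntourage, shift_one_iterate]

lemma card_pow_le_netMaxcard_shift [Fintype A] [Nonempty A] (n : ℕ) :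
    (Fintype.card A : ℕ∞) ^ n ≤
      netMaxcard (shift 1) Set.univ {p : (ℕ → A) × (ℕ → A) | p.1 0 = p.2 0} n := by
  classical
  let e : (Fin n → A) → ℕ → A := fun w => Function.extend Fin.val w fun _ => Classical.arbitrary A
  have he : ∀ w (k : Fin n), e w k = w k := fun w k => Fin.val_injective.extend_apply w _ k
  have e_inj : Function.Injective e := fun w w' h => funext fun k => by rw [← he w, ← he w', h]
  have net : IsDynNetIn (shift 1) Set.univ {p | p.1 0 = p.2 0} n (univ.image e : Set (ℕ → A)) := by
    refine ⟨Set.subset_univ _, ?_⟩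
    simp only [coe_image, coe_univ, Set.image_univ]
    rintro _ ⟨w, rfl⟩ _ ⟨w', rfl⟩ hne
    refine Set.disjoint_left.2 fun y hy hy' => hne (congrArg e (funext fun k => ?_))
    rw [mem_ball_dynEntourage_shift_iff] at hy hy'
    rw [← he w, ← he w', hy k k.isLt, hy' k k.isLt]
  simpa [card_image_of_injective _ e_inj] using net.card_le_netMaxcard

attribute [local instance] PiNat.metricSpace

lemma setOf_apply_zero_eq_mem_uniformity [TopologicalSpace A] [DiscreteTopology A] :
    {p : (ℕ → A) × (ℕ → A) | p.1 0 = p.2 0} ∈ uniformity (ℕ → A) :=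
  mem_of_superset (Metric.dist_mem_uniformity one_pos) fun _ hp =>
    PiNat.apply_eq_of_dist_lt (n := 0) (by simpa using hp) le_rfl

theorem log_card_le_coverEntropy_shift [TopologicalSpace A] [DiscreteTopology A] [Fintype A] :
    ENNReal.log (Fintype.card A) ≤ coverEntropy (shift 1) (Set.univ : Set (ℕ → A)) := by
  cases isEmpty_or_nonempty A
  · simp
  calc ENNReal.log (Fintype.card A)
      = ExpGrowth.expGrowthSup fun n => (Fintype.card A : ENNReal) ^ n :=
        ExpGrowth.expGrowthSup_pow.symm
    _ ≤ netEntropyEntourage (shift 1) Set.univ {p : (ℕ → A) × (ℕ → A) | p.1 0 = p.2 0} :=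
      ExpGrowth.expGrowthSup_monotone fun n => by
        simpa using ENat.toENNReal_le.2 (card_pow_le_netMaxcard_shift n)
    _ ≤ coverEntropy (shift 1) Set.univ :=
      netEntropyEntourage_le_coverEntropy _ _ setOf_apply_zero_eq_mem_uniformity

end FullShift

/-- There exists a topological dynamical system (a compact metric space with a
continuous self-map) with positive topological entropy, a point `z` and a
continuous function `F` whose Möbius correlations do not vanish: Sarnak's
orthogonality conclusion fails for some positive-entropy system. -/
theorem exists_positive_entropy_system_not_moebius_orthogonal :
    ∃ (Y : Type) (_ : MetricSpace Y) (_ : CompactSpace Y) (T : Y → Y),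
      Continuous T ∧ 0 < Dynamics.coverEntropy T Set.univ ∧
      ∃ (z : Y) (F : Y → ℝ), Continuous F ∧
        0 < Filter.limsup
          (fun N : ℕ => (1 / N : ℝ) *
            |∑ n ∈ Finset.Icc 1 N, (moebius n : ℝ) * F (T^[n] z)|)
          Filter.atTop := by
  refine ⟨ℕ → SignType, PiNat.metricSpace, inferInstance, shift 1, continuous_shift 1,
    ?_, fun n => SignType.sign (μ n : ℝ), fun y => y 0,
    (continuous_of_discreteTopology (f := ((↑) : SignType → ℝ))).comp (continuous_apply 0), ?_⟩
  · refine lt_of_lt_of_le ?_ log_card_le_coverEntropy_shift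
    simp [show Fintype.card SignType = 3 from rfl]
  · simp only [shift_one_iterate, shift_apply, add_zero, self_mul_sign, sum_abs_moebius,
      Nat.abs_cast]
    exact limsup_squarefree_density_pos
end
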